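/- Let J be an almost complex structure and ∇ a connection on ℝ^n with torsion T. Then J^{G,∇} = J^{H,∇} (equality of matrix fields on T*ℝ^n) if and only if T(J·,·) = T(·,J·), i.e. J^l_i(x) T^k_{lj}(x) = T^k_{il}(x) J^l_j(x) for all x and all indices i,j,k. -/
import Mathlib


open Matrix BigOperators

noncomputable section

/-- Torsion components `T^k_{ij} = Γ^k_{ij} − Γ^k_{ji}`. -/
def torsion {n : ℕ} (Γ : (Fin n → ℝ) → Fin n → Fin n → Fin n → ℝ)
    (x : Fin n → ℝ) (k i j : Fin n) : ℝ :=
  Γ x k i j - Γ x k j i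

/-- Symmetrized Christoffel symbols `Γ̃^k_{ij} = (Γ^k_{ij} + Γ^k_{ji})/2`. -/
def symCh {n : ℕ} (Γ : (Fin n → ℝ) → Fin n → Fin n → Fin n → ℝ)
    (x : Fin n → ℝ) (k i j : Fin n) : ℝ :=
  (Γ x k i j + Γ x k j i) / 2

/-- Lower-left block `A(x,p)` of the generalized horizontal lift. -/
def Ablock {n : ℕ} (J : (Fin n → ℝ) → Matrix (Fin n) (Fin n) ℝ)
    (Γ : (Fin n → ℝ) → Fin n → Fin n → Fin n → ℝ) (x p : Fin n → ℝ) :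
    Matrix (Fin n) (Fin n) ℝ :=
  Matrix.of fun i j =>
    ∑ k, p k * ((∑ l, Γ x k l i * J x l j) - ∑ l, Γ x k j l * J x l i)

/-- The generalized horizontal lift `J^{G,∇}(x,p) = [[J(x), 0], [A(x,p), ᵗJ(x)]]`. -/
def JG {n : ℕ} (J : (Fin n → ℝ) → Matrix (Fin n) (Fin n) ℝ)
    (Γ : (Fin n → ℝ) → Fin n → Fin n → Fin n → ℝ) (x p : Fin n → ℝ) :
    Matrix (Fin n ⊕ Fin n) (Fin n ⊕ Fin n) ℝ :=
  Matrix.fromBlocks (J x) 0 (Ablock J Γ x p) (J x)ᵀ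

/-- Lower-left block of the horizontal lift:
`C^i_j(x,p) = p_k (Γ̃^k_{il} J^l_j − Γ̃^k_{jl} J^l_i)`. -/
def Cblock {n : ℕ} (J : (Fin n → ℝ) → Matrix (Fin n) (Fin n) ℝ)
    (Γ : (Fin n → ℝ) → Fin n → Fin n → Fin n → ℝ) (x p : Fin n → ℝ) :
    Matrix (Fin n) (Fin n) ℝ :=
  Matrix.of fun i j =>
    ∑ k, p k * ((∑ l, symCh Γ x k i l * J x l j) - ∑ l, symCh Γ x k j l * J x l i)

/-- The horizontal lift `J^{H,∇}(x,p) = [[J(x), 0], [C(x,p), ᵗJ(x)]]`. -/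
def JH {n : ℕ} (J : (Fin n → ℝ) → Matrix (Fin n) (Fin n) ℝ)
    (Γ : (Fin n → ℝ) → Fin n → Fin n → Fin n → ℝ) (x p : Fin n → ℝ) :
    Matrix (Fin n ⊕ Fin n) (Fin n ⊕ Fin n) ℝ :=
  Matrix.fromBlocks (J x) 0 (Cblock J Γ x p) (J x)ᵀ

lemma key {n : ℕ} (J : (Fin n → ℝ) → Matrix (Fin n) (Fin n) ℝ)
    (Γ : (Fin n → ℝ) → Fin n → Fin n → Fin n → ℝ) (x p : Fin n → ℝ) (i j : Fin n) :
    Ablock J Γ x p i j - Cblock J Γ x p i j =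
      (1/2) * ∑ k, p k *
        (∑ l, J x l i * torsion Γ x k l j - ∑ l, torsion Γ x k i l * J x l j) := by
  simp only [Ablock, Cblock, Matrix.of_apply, Finset.mul_sum, ← Finset.sum_sub_distrib]
  rw [Finset.sum_congr rfl]
  intro k _
  simp only [torsion, symCh, ← Finset.sum_sub_distrib, Finset.mul_sum]
  rw [Finset.sum_congr rfl]
  intro l _
  ring

/-- `J^{G,∇} = J^{H,∇}` if and only if `T(J·,·) = T(·,J·)`, i.e.
`J^l_i T^k_{lj} = T^k_{il} J^l_j` (sum over `l`). -/
theorem statement6 (n : ℕ)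
    (J : (Fin n → ℝ) → Matrix (Fin n) (Fin n) ℝ)
    (Γ : (Fin n → ℝ) → Fin n → Fin n → Fin n → ℝ)
    (hJsmooth : ∀ k j : Fin n, ContDiff ℝ (⊤ : ℕ∞) fun x => J x k j)
    (hΓsmooth : ∀ k i j : Fin n, ContDiff ℝ (⊤ : ℕ∞) fun x => Γ x k i j)
    (hJ : ∀ x, J x * J x = -1) :
    (∀ x p : Fin n → ℝ, JG J Γ x p = JH J Γ x p) ↔
      (∀ (x : Fin n → ℝ) (i j k : Fin n),
        ∑ l, J x l i * torsion Γ x k l j = ∑ l, torsion Γ x k i l * J x l j) := by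
  constructor
  · intro h x i j k
    have h2 := congrFun (congrFun (h x (Pi.single k 1)) (Sum.inr i)) (Sum.inl j)
    simp only [JG, JH, Matrix.fromBlocks_apply₂₁] at h2
    have h3 := key J Γ x (Pi.single k 1) i j
    rw [h2, sub_self] at h3
    have h4 : (∑ k', (Pi.single k 1 : Fin n → ℝ) k' *
        (∑ l, J x l i * torsion Γ x k' l j - ∑ l, torsion Γ x k' i l * J x l j)) =
        (∑ l, J x l i * torsion Γ x k l j - ∑ l, torsion Γ x k i l * J x l j) := by
      rw [Finset.sum_eq_single k]
      · simp
      · intro b _ hb; simp [Pi.single_apply, hb]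
      · simp
    rw [h4] at h3
    have := h3.symm
    have h5 : (∑ l, J x l i * torsion Γ x k l j - ∑ l, torsion Γ x k i l * J x l j) = 0 := by
      linarith
    linarith [h5]
  · intro h x p
    have hAC : Ablock J Γ x p = Cblock J Γ x p := by
      ext i j
      have h3 := key J Γ x p i j
      simp only [h, sub_self, mul_zero, Finset.sum_const_zero] at h3
      linarith
    unfold JG JH
    rw [hAC]
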